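/- arXiv:1802.09112 — 3 statements merged into one kernel-verified Lean document; each statement's English description precedes it below -/
import Mathlib

section
/- If f is continuous on [0,δ], thrice differentiable on (0,δ], f(0) = 0, and f''' is strictly decreasing on (0,δ], then lim_{w→0⁺} f'''(w) > g₃ and f'''(δ) < g₃, where g₃ = 6f(δ)/δ³ - 6f'(δ)/δ² + 3f''(δ)/δ. -/
/-! Let `M` be the cubic coefficient for which the cubic Taylor polynomial of `f` at `δ` with
third-order term `M (x - δ)³ / 6` also agrees with `f` at `0`; this is `M = g₃`. Applying Rolle's
theorem three times to `f` minus that polynomial gives `ξ ∈ (0, δ)` with `f'''(ξ) = g₃`, and strict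
monotonicity of `f'''` places `f'''(δ)` below and the limit at `0⁺` above `f'''(ξ)`. -/

open Set Filter Topology

noncomputable def taylorCubic (x₀ c₀ c₁ c₂ c₃ x : ℝ) : ℝ :=
  c₀ + c₁ * (x - x₀) + c₂ * (x - x₀) ^ 2 / 2 + c₃ * (x - x₀) ^ 3 / 6

@[simp]
theorem taylorCubic_self (x₀ c₀ c₁ c₂ c₃ : ℝ) : taylorCubic x₀ c₀ c₁ c₂ c₃ x₀ = c₀ := by
  simp [taylorCubic]

@[simp]
theorem taylorCubic_const (x₀ c x : ℝ) : taylorCubic x₀ c 0 0 0 x = c := by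
  simp [taylorCubic]

theorem hasDerivAt_taylorCubic (x₀ c₀ c₁ c₂ c₃ x : ℝ) :
    HasDerivAt (taylorCubic x₀ c₀ c₁ c₂ c₃) (taylorCubic x₀ c₁ c₂ c₃ 0 x) x := by
  have hx : HasDerivAt (fun x : ℝ => x - x₀) 1 x := (hasDerivAt_id x).sub_const x₀
  refine ((((hasDerivAt_const x c₀).add (hx.const_mul c₁)).add
    (((hx.pow 2).const_mul c₂).div_const 2)).add
      (((hx.pow 3).const_mul c₃).div_const 6)).congr_deriv ?_
  simp only [taylorCubic]
  ring

theorem exists_third_deriv_eq_zero_of_hasDerivAt {F F₁ F₂ F₃ : ℝ → ℝ} {a b : ℝ}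
    (hab : a < b) (hF : ContinuousOn F (Icc a b))
    (hF₁ : ∀ x ∈ Ioo a b, HasDerivAt F (F₁ x) x)
    (hF₂ : ∀ x ∈ Ioc a b, HasDerivAt F₁ (F₂ x) x)
    (hF₃ : ∀ x ∈ Ioc a b, HasDerivAt F₂ (F₃ x) x)
    (ha : F a = 0) (hb : F b = 0) (hb₁ : F₁ b = 0) (hb₂ : F₂ b = 0) :
    ∃ ξ ∈ Ioo a b, F₃ ξ = 0 := by
  have hsub : ∀ x ∈ Ioo a b, Icc x b ⊆ Ioc a b := fun x hx y hy => ⟨hx.1.trans_le hy.1, hy.2⟩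
  have hcont : ∀ {G G' : ℝ → ℝ} {x}, x ∈ Ioo a b → (∀ y ∈ Ioc a b, HasDerivAt G (G' y) y) →
      ContinuousOn G (Icc x b) := fun hx hG y hy =>
    (hG y (hsub _ hx hy)).continuousAt.continuousWithinAt
  obtain ⟨x₁, hx₁, h₁⟩ := exists_hasDerivAt_eq_zero hab hF (ha.trans hb.symm) hF₁
  obtain ⟨x₂, hx₂, h₂⟩ := exists_hasDerivAt_eq_zero hx₁.2 (hcont hx₁ hF₂) (h₁.trans hb₁.symm)
    fun y hy => hF₂ y (hsub _ hx₁ (Ioo_subset_Icc_self hy))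
  have hx₂' : x₂ ∈ Ioo a b := ⟨hx₁.1.trans hx₂.1, hx₂.2⟩
  obtain ⟨ξ, hξ, h₃⟩ := exists_hasDerivAt_eq_zero hx₂.2 (hcont hx₂' hF₃) (h₂.trans hb₂.symm)
    fun y hy => hF₃ y (hsub _ hx₂' (Ioo_subset_Icc_self hy))
  exact ⟨ξ, ⟨hx₂'.1.trans hξ.1, hξ.2⟩, h₃⟩

-- Mathlib's `taylor_mean_remainder_lagrange` expands at the left endpoint and needs `f` to be `C²`
-- on the closed interval; here `f''` may blow up at `a`.
theorem taylor_mean_remainder_lagrange_cubic_right {f : ℝ → ℝ} {a b : ℝ} (hab : a < b)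
    (hcont : ContinuousOn f (Icc a b))
    (hdiff : ∀ x ∈ Ioc a b, DifferentiableAt ℝ f x ∧
      DifferentiableAt ℝ (deriv f) x ∧ DifferentiableAt ℝ (deriv (deriv f)) x) :
    ∃ ξ ∈ Ioo a b,
      f a = taylorCubic b (f b) (deriv f b) (deriv (deriv f) b) (deriv (deriv (deriv f)) ξ) a := by
  set M := 6 * (f a - taylorCubic b (f b) (deriv f b) (deriv (deriv f) b) 0 a) / (a - b) ^ 3
  have hfa : f a = taylorCubic b (f b) (deriv f b) (deriv (deriv f) b) M a := by
    have : a - b ≠ 0 := sub_ne_zero.2 hab.ne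
    simp only [M, taylorCubic]
    field_simp
    ring
  obtain ⟨ξ, hξ, hM⟩ := exists_third_deriv_eq_zero_of_hasDerivAt
    (F := fun x => f x - taylorCubic b (f b) (deriv f b) (deriv (deriv f) b) M x)
    (F₁ := fun x => deriv f x - taylorCubic b (deriv f b) (deriv (deriv f) b) M 0 x)
    (F₂ := fun x => deriv (deriv f) x - taylorCubic b (deriv (deriv f) b) M 0 0 x)
    (F₃ := fun x => deriv (deriv (deriv f)) x - taylorCubic b M 0 0 0 x) hab
    (hcont.sub (fun x _ => (hasDerivAt_taylorCubic ..).continuousAt.continuousWithinAt))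
    (fun x hx => (hdiff x (Ioo_subset_Ioc_self hx)).1.hasDerivAt.sub (hasDerivAt_taylorCubic ..))
    (fun x hx => (hdiff x hx).2.1.hasDerivAt.sub (hasDerivAt_taylorCubic ..))
    (fun x hx => (hdiff x hx).2.2.hasDerivAt.sub (hasDerivAt_taylorCubic ..))
    (sub_eq_zero.2 hfa) (by simp) (by simp) (by simp)
  refine ⟨ξ, hξ, ?_⟩
  have hξM : deriv (deriv (deriv f)) ξ = M := by simpa [sub_eq_zero] using hM
  rwa [hξM]

theorem StrictAntiOn.lt_of_tendsto_nhdsGT {α : Type*} [LinearOrder α] [TopologicalSpace α]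
    [OrderClosedTopology α] {g : ℝ → α} {a b x : ℝ} {L : α} (hg : StrictAntiOn g (Ioc a b))
    (hL : Tendsto g (𝓝[>] a) (𝓝 L)) (hx : x ∈ Ioc a b) : g x < L := by
  have hle : ∀ y ∈ Ioc a b, g y ≤ L := fun y hy => ge_of_tendsto hL <| by
    filter_upwards [Ioo_mem_nhdsGT hy.1] with w hw
    exact (hg ⟨hw.1, hw.2.le.trans hy.2⟩ hy hw.2).le
  obtain ⟨m, ham, hmx⟩ := exists_between hx.1
  exact (hg ⟨ham, hmx.le.trans hx.2⟩ hx hmx).trans_le (hle m ⟨ham, hmx.le.trans hx.2⟩)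

theorem stmt_7 (f : ℝ → ℝ) (δ : ℝ) (hδ : 0 < δ) (hf0 : f 0 = 0)
    (hcont : ContinuousOn f (Set.Icc 0 δ))
    (hdiff : ∀ w ∈ Set.Ioc (0:ℝ) δ, DifferentiableAt ℝ f w ∧
      DifferentiableAt ℝ (deriv f) w ∧ DifferentiableAt ℝ (deriv (deriv f)) w)
    (hanti : StrictAntiOn (deriv (deriv (deriv f))) (Set.Ioc 0 δ))
    (L : EReal)
    (hL : Filter.Tendsto (fun w : ℝ => (((deriv (deriv (deriv f)) w : ℝ) : EReal)))
      (nhdsWithin 0 (Set.Ioi 0)) (nhds L)) :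
    ((6 * f δ / δ ^ 3 - 6 * deriv f δ / δ ^ 2 + 3 * deriv (deriv f) δ / δ : ℝ) : EReal) < L ∧
    deriv (deriv (deriv f)) δ <
      6 * f δ / δ ^ 3 - 6 * deriv f δ / δ ^ 2 + 3 * deriv (deriv f) δ / δ := by
  obtain ⟨ξ, hξ, hf⟩ := taylor_mean_remainder_lagrange_cubic_right hδ hcont hdiff
  have hg₃ : deriv (deriv (deriv f)) ξ =
      6 * f δ / δ ^ 3 - 6 * deriv f δ / δ ^ 2 + 3 * deriv (deriv f) δ / δ := by
    rw [hf0, taylorCubic] at hf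
    field_simp
    linear_combination 6 * hf
  have hξ' : ξ ∈ Ioc 0 δ := Ioo_subset_Ioc_self hξ
  rw [← hg₃]
  exact ⟨(EReal.coe_strictMono.comp_strictAntiOn hanti).lt_of_tendsto_nhdsGT hL hξ',
    hanti hξ' (right_mem_Ioc.2 hδ) hξ.2⟩
end

section
/- Let f be continuous on [0,δ], f(0)=0, thrice differentiable on (0,δ], with f''' first strictly decreasing then strictly increasing on (0,δ]. Suppose lim_{w→0⁺} f'(w) > g₁, lim_{w→0⁺} f''(w) < g₂, lim_{w→0⁺} f'''(w) > g₃, and f'''(δ) ≤ g₃. Then f(w) ≥ g(w) for all w ∈ [0,δ]. -/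
/-!
Let `p₀ = f - g`, `p₁ = p₀'`, `p₂ = p₁'` and `p₃ = p₂' = f''' - g₃`; `p₀`, `p₁`, `p₂` vanish at `δ`.
Since `f'''` falls and then rises to `f'''(δ) ≤ g₃`, once `p₃ ≤ 0` it stays so. A function whose
derivative is first positive and then nonpositive rises and then falls, so on any interval its
minimum is attained at an endpoint. Applied on `[x, δ]` this propagates the single sign change
down the tower: once `p₂ ≥ 0` it stays so, hence once `p₁ ≤ 0` it stays so; finally
`p₀(0) = p₀(δ) = 0` gives `p₀ ≥ 0` on `[0, δ]`.
-/

open Set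

def UpwardClosedOn (p : ℝ → Prop) (s : Set ℝ) : Prop :=
  ∀ ⦃x⦄, x ∈ s → ∀ ⦃y⦄, y ∈ s → x ≤ y → p x → p y

theorem UpwardClosedOn.mono {p : ℝ → Prop} {s t : Set ℝ} (h : UpwardClosedOn p t) (hst : s ⊆ t) :
    UpwardClosedOn p s :=
  fun _ hx _ hy hxy => h (hst hx) (hst hy) hxy

theorem upwardClosedOn_le_of_antitoneOn_of_monotoneOn {h : ℝ → ℝ} {a b c t : ℝ}
    (hanti : AntitoneOn h (Ioc a c)) (hmono : MonotoneOn h (Icc c b)) (hcb : c ≤ b)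
    (hb : h b ≤ t) : UpwardClosedOn (fun x => h x ≤ t) (Ioc a b) := by
  intro x hx y hy hxy hxt
  rcases le_or_gt y c with hyc | hcy
  · exact (hanti ⟨hx.1, hxy.trans hyc⟩ ⟨hy.1, hyc⟩ hxy).trans hxt
  · exact (hmono ⟨hcy.le, hy.2⟩ ⟨hcb, le_rfl⟩ hy.2).trans hb

theorem min_le_of_upwardClosedOn_deriv_nonpos {F F' : ℝ → ℝ} {a b w : ℝ}
    (hcont : ContinuousOn F (Icc a b)) (hF : ∀ x ∈ Ioo a b, HasDerivAt F (F' x) x)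
    (hF' : UpwardClosedOn (fun x => F' x ≤ 0) (Ioo a b)) (hw : w ∈ Icc a b) :
    min (F a) (F b) ≤ F w := by
  by_contra! hlt
  obtain ⟨hwa, hwb⟩ := lt_min_iff.1 hlt
  have haw : a < w := hw.1.lt_of_ne (by rintro rfl; exact hwa.false)
  have hwb' : w < b := hw.2.lt_of_ne (by rintro rfl; exact hwb.false)
  obtain ⟨z₁, hz₁, hslope₁⟩ := exists_hasDerivAt_eq_slope F F' haw
    (hcont.mono (Icc_subset_Icc le_rfl hw.2)) fun x hx => hF x ⟨hx.1, hx.2.trans hwb'⟩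
  obtain ⟨z₂, hz₂, hslope₂⟩ := exists_hasDerivAt_eq_slope F F' hwb'
    (hcont.mono (Icc_subset_Icc hw.1 le_rfl)) fun x hx => hF x ⟨haw.trans hx.1, hx.2⟩
  have hfall : F' z₁ ≤ 0 := by
    rw [hslope₁]
    exact (div_neg_of_neg_of_pos (sub_neg.2 hwa) (sub_pos.2 haw)).le
  have hrise : 0 < F' z₂ := by
    rw [hslope₂]
    exact div_pos (sub_pos.2 hwb) (sub_pos.2 hwb')
  exact hrise.not_ge (hF' ⟨hz₁.1, hz₁.2.trans hwb'⟩ ⟨haw.trans hz₂.1, hz₂.2⟩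
    (hz₁.2.trans hz₂.1).le hfall)

theorem upwardClosedOn_nonneg_of_deriv_nonpos {φ φ' : ℝ → ℝ} {a b : ℝ}
    (hφ : ∀ x ∈ Ioc a b, HasDerivAt φ (φ' x) x) (hb : φ b = 0)
    (hφ' : UpwardClosedOn (fun x => φ' x ≤ 0) (Ioc a b)) :
    UpwardClosedOn (fun x => 0 ≤ φ x) (Ioc a b) := by
  intro x hx y hy hxy hφx
  have hsub : Icc x b ⊆ Ioc a b := fun t ht => ⟨hx.1.trans_le ht.1, ht.2⟩
  have hmin := min_le_of_upwardClosedOn_deriv_nonpos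
    (fun t ht => (hφ t (hsub ht)).continuousAt.continuousWithinAt)
    (fun t ht => hφ t (hsub (Ioo_subset_Icc_self ht)))
    (hφ'.mono (Ioo_subset_Icc_self.trans hsub)) ⟨hxy, hy.2⟩
  rwa [hb, min_eq_right hφx] at hmin

theorem upwardClosedOn_nonpos_of_deriv_nonneg {φ φ' : ℝ → ℝ} {a b : ℝ}
    (hφ : ∀ x ∈ Ioc a b, HasDerivAt φ (φ' x) x) (hb : φ b = 0)
    (hφ' : UpwardClosedOn (fun x => 0 ≤ φ' x) (Ioc a b)) :
    UpwardClosedOn (fun x => φ x ≤ 0) (Ioc a b) := by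
  have hneg := upwardClosedOn_nonneg_of_deriv_nonpos (φ := -φ) (φ' := -φ')
    (fun x hx => (hφ x hx).neg) (by simp [hb])
    fun x hx y hy hxy hx' => neg_nonpos.2 (hφ' hx hy hxy (neg_nonpos.1 hx'))
  exact fun x hx y hy hxy hx' => neg_nonneg.1 (hneg hx hy hxy (neg_nonneg.2 hx'))

theorem hasDerivAt_linear (a b x : ℝ) : HasDerivAt (fun w => a + b * w) b x := by
  simpa using ((hasDerivAt_id x).const_mul b).const_add a

theorem hasDerivAt_quadratic (a b c x : ℝ) :
    HasDerivAt (fun w => a + b * w + c / 2 * w ^ 2) (b + c * x) x := by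
  refine ((((hasDerivAt_id x).const_mul b).const_add a).add
    ((hasDerivAt_pow 2 x).const_mul (c / 2))).congr_deriv ?_
  push_cast
  ring

theorem hasDerivAt_cubic (a b c x : ℝ) :
    HasDerivAt (fun w => a * w + b / 2 * w ^ 2 + c / 6 * w ^ 3) (a + b * x + c / 2 * x ^ 2) x := by
  refine ((((hasDerivAt_id x).const_mul a).add ((hasDerivAt_pow 2 x).const_mul (b / 2))).add
    ((hasDerivAt_pow 3 x).const_mul (c / 6))).congr_deriv ?_
  push_cast
  ring

theorem cubic_interpolation {δ A B C g1 g2 g3 : ℝ} (hδ : δ ≠ 0)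
    (hg1 : g1 = 3 * A / δ - 2 * B + δ * C / 2)
    (hg2 : g2 = -6 * A / δ ^ 2 + 6 * B / δ - 2 * C)
    (hg3 : g3 = 6 * A / δ ^ 3 - 6 * B / δ ^ 2 + 3 * C / δ) :
    g1 * δ + g2 / 2 * δ ^ 2 + g3 / 6 * δ ^ 3 = A ∧ g1 + g2 * δ + g3 / 2 * δ ^ 2 = B ∧
      g2 + g3 * δ = C := by
  subst hg1 hg2 hg3
  refine ⟨?_, ?_, ?_⟩ <;> field_simp <;> ring

theorem stmt_15_general (f : ℝ → ℝ) (δ : ℝ) (hf0 : f 0 = 0)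
    (hcont : ContinuousOn f (Set.Icc 0 δ))
    (hdiff : ∀ w ∈ Set.Ioc (0:ℝ) δ, DifferentiableAt ℝ f w ∧
      DifferentiableAt ℝ (deriv f) w ∧ DifferentiableAt ℝ (deriv (deriv f)) w)
    (c : ℝ) (hc : c ∈ Set.Ioc (0:ℝ) δ)
    (hanti : StrictAntiOn (deriv (deriv (deriv f))) (Set.Ioc 0 c))
    (hmono : StrictMonoOn (deriv (deriv (deriv f))) (Set.Icc c δ))
    (g1 g2 g3 : ℝ)
    (hg1 : g1 = 3 * f δ / δ - 2 * deriv f δ + δ * deriv (deriv f) δ / 2)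
    (hg2 : g2 = -6 * f δ / δ ^ 2 + 6 * deriv f δ / δ - 2 * deriv (deriv f) δ)
    (hg3 : g3 = 6 * f δ / δ ^ 3 - 6 * deriv f δ / δ ^ 2 + 3 * deriv (deriv f) δ / δ)
    (g : ℝ → ℝ) (hg : g = fun w => g1 * w + g2 / 2 * w ^ 2 + g3 / 6 * w ^ 3)
    (h4 : deriv (deriv (deriv f)) δ ≤ g3) :
    ∀ w ∈ Set.Icc (0:ℝ) δ, g w ≤ f w := by
  subst hg
  obtain ⟨hf, hf', hf''⟩ := cubic_interpolation (hc.1.trans_le hc.2).ne' hg1 hg2 hg3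
  have hp₃ : UpwardClosedOn (fun x => deriv (deriv (deriv f)) x - g3 ≤ 0) (Ioc 0 δ) := by
    simpa only [sub_nonpos] using upwardClosedOn_le_of_antitoneOn_of_monotoneOn
      hanti.antitoneOn hmono.monotoneOn hc.2 h4
  have hd₂ : ∀ x ∈ Ioc 0 δ, HasDerivAt (fun w => deriv (deriv f) w - (g2 + g3 * w))
      (deriv (deriv (deriv f)) x - g3) x :=
    fun x hx => (hdiff x hx).2.2.hasDerivAt.sub (hasDerivAt_linear g2 g3 x)
  have hd₁ : ∀ x ∈ Ioc 0 δ, HasDerivAt (fun w => deriv f w - (g1 + g2 * w + g3 / 2 * w ^ 2))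
      (deriv (deriv f) x - (g2 + g3 * x)) x :=
    fun x hx => (hdiff x hx).2.1.hasDerivAt.sub (hasDerivAt_quadratic g1 g2 g3 x)
  have hd₀ : ∀ x ∈ Ioc 0 δ, HasDerivAt (fun w => f w - (g1 * w + g2 / 2 * w ^ 2 + g3 / 6 * w ^ 3))
      (deriv f x - (g1 + g2 * x + g3 / 2 * x ^ 2)) x :=
    fun x hx => (hdiff x hx).1.hasDerivAt.sub (hasDerivAt_cubic g1 g2 g3 x)
  have hp₂ := upwardClosedOn_nonneg_of_deriv_nonpos hd₂ (by simp [hf'']) hp₃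
  have hp₁ := upwardClosedOn_nonpos_of_deriv_nonneg hd₁ (by simp [hf']) hp₂
  have hcont₀ : ContinuousOn (fun w => f w - (g1 * w + g2 / 2 * w ^ 2 + g3 / 6 * w ^ 3))
      (Icc 0 δ) :=
    hcont.sub (by fun_prop)
  intro w hw
  have hmin := min_le_of_upwardClosedOn_deriv_nonpos hcont₀
    (fun x hx => hd₀ x (Ioo_subset_Ioc_self hx)) (hp₁.mono Ioo_subset_Ioc_self) hw
  simpa [hf0, hf] using hmin

theorem stmt_15 (f : ℝ → ℝ) (δ : ℝ) (hδ : 0 < δ) (hf0 : f 0 = 0)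
    (hcont : ContinuousOn f (Set.Icc 0 δ))
    (hdiff : ∀ w ∈ Set.Ioc (0:ℝ) δ, DifferentiableAt ℝ f w ∧
      DifferentiableAt ℝ (deriv f) w ∧ DifferentiableAt ℝ (deriv (deriv f)) w)
    (c : ℝ) (hc : c ∈ Set.Ioc (0:ℝ) δ)
    (hanti : StrictAntiOn (deriv (deriv (deriv f))) (Set.Ioc 0 c))
    (hmono : StrictMonoOn (deriv (deriv (deriv f))) (Set.Icc c δ))
    (g1 g2 g3 : ℝ)
    (hg1 : g1 = 3 * f δ / δ - 2 * deriv f δ + δ * deriv (deriv f) δ / 2)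
    (hg2 : g2 = -6 * f δ / δ ^ 2 + 6 * deriv f δ / δ - 2 * deriv (deriv f) δ)
    (hg3 : g3 = 6 * f δ / δ ^ 3 - 6 * deriv f δ / δ ^ 2 + 3 * deriv (deriv f) δ / δ)
    (g : ℝ → ℝ) (hg : g = fun w => g1 * w + g2 / 2 * w ^ 2 + g3 / 6 * w ^ 3)
    (L1 L2 L3 : EReal)
    (hL1 : Filter.Tendsto (fun w : ℝ => (((deriv f w : ℝ)) : EReal))
      (nhdsWithin 0 (Set.Ioi 0)) (nhds L1))
    (hL2 : Filter.Tendsto (fun w : ℝ => (((deriv (deriv f) w : ℝ)) : EReal))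
      (nhdsWithin 0 (Set.Ioi 0)) (nhds L2))
    (hL3 : Filter.Tendsto (fun w : ℝ => (((deriv (deriv (deriv f)) w : ℝ)) : EReal))
      (nhdsWithin 0 (Set.Ioi 0)) (nhds L3))
    (h1 : (g1 : EReal) < L1) (h2 : L2 < (g2 : EReal)) (h3 : (g3 : EReal) < L3)
    (h4 : deriv (deriv (deriv f)) δ ≤ g3) :
    ∀ w ∈ Set.Icc (0:ℝ) δ, g w ≤ f w :=
  stmt_15_general f δ hf0 hcont hdiff c hc hanti hmono g1 g2 g3 hg1 hg2 hg3 g hg h4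
end

section
/- For f(w) = w^p with 0 < p < 1 and any δ > 0, letting λ̂ = (f')⁻¹(g₁) where g₁ is the derivative at 0 of the δ-smoothing g of f, the shift smoothing h(w) = (w + λ̂)^p − λ̂^p satisfies h(w) ≤ g(w) for all w ≥ 0. -/
/-!
On `(δ, ∞)` the bound is subadditivity of `w ↦ w ^ p`. On `[0, δ]` put `D = g - h`, where
`h w = (w + λ̂) ^ p - λ̂ ^ p`. Then `D 0 = 0`, and `D' 0 = 0` is exactly the defining equation of
`λ̂`. Since `g` matches `f` to second order at `δ` and the derivatives of the shifted power are
smaller in absolute value, `D' δ ≥ 0` and `D'' δ ≤ 0`. As `D''` is affine plus a positive multiple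
of the convex function `(w + λ̂) ^ (p - 2)`, it is convex, which forces `D' ≥ 0` on `[0, δ]`;
hence `D` is monotone and nonnegative.
-/

open Set Real

lemma convexOn_rpow_of_nonpos {q : ℝ} (hq : q ≤ 0) : ConvexOn ℝ (Ioi 0) fun x : ℝ => x ^ q := by
  refine MonotoneOn.convexOn_of_deriv (convex_Ioi 0)
    (fun x hx => (continuousAt_rpow_const x q (Or.inl (ne_of_gt hx))).continuousWithinAt)
    (fun x hx => (hasDerivAt_rpow_const (Or.inl (ne_of_gt (interior_subset hx : (0 : ℝ) < x))))
      |>.differentiableAt.differentiableWithinAt) ?_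
  rw [interior_Ioi, deriv_rpow_const']
  intro x hx y _ hxy
  exact mul_le_mul_of_nonpos_left (rpow_le_rpow_of_nonpos hx hxy (by linarith)) hq

lemma convexOn_add_const_rpow_of_nonpos {q c : ℝ} (hq : q ≤ 0) :
    ConvexOn ℝ (Ioi (-c)) fun x : ℝ => (x + c) ^ q := by
  have h := (convexOn_rpow_of_nonpos hq).translate_left c
  have hs : (fun z => c + z) ⁻¹' Ioi 0 = Ioi (-c) := by
    ext x
    simp [neg_lt_iff_pos_add']
  rwa [hs] at h

lemma nonneg_of_convexOn_deriv {φ φ' : ℝ → ℝ} {a b : ℝ}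
    (hφ : ∀ x ∈ Icc a b, HasDerivAt φ (φ' x) x) (hconv : ConvexOn ℝ (Icc a b) φ')
    (hb' : φ' b ≤ 0) (ha : 0 ≤ φ a) (hb : 0 ≤ φ b) : ∀ x ∈ Icc a b, 0 ≤ φ x := by
  intro v hv
  have hcont : ∀ s ⊆ Icc a b, ContinuousOn φ s := fun s hs x hx =>
    (hφ x (hs hx)).continuousAt.continuousWithinAt
  have hderiv : ∀ s ⊆ Icc a b, ∀ x ∈ interior s, HasDerivWithinAt φ (φ' x) (interior s) x :=
    fun s hs x hx => (hφ x (hs (interior_subset hx))).hasDerivWithinAt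
  -- If `φ'` is negative somewhere in `[a, v]`, convexity keeps it `≤ 0` on `[v, b]`, so `φ`
  -- decreases from `v` to `b`; otherwise `φ` increases from `a` to `v`.
  by_cases hneg : ∃ x ∈ Icc a v, φ' x < 0
  · obtain ⟨x, hx, hφ'x⟩ := hneg
    have hvb : Icc v b ⊆ Icc a b := Icc_subset_Icc_left hv.1
    have hnonpos : ∀ z ∈ Icc v b, φ' z ≤ 0 := fun z hz =>
      (hconv.le_on_segment ⟨hx.1, hx.2.trans hv.2⟩ (right_mem_Icc.2 (hv.1.trans hv.2))
        (segment_eq_Icc (hx.2.trans hz.1 |>.trans hz.2) ▸ ⟨hx.2.trans hz.1, hz.2⟩)).trans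
        (max_le hφ'x.le hb')
    have hanti := antitoneOn_of_hasDerivWithinAt_nonpos (convex_Icc v b) (hcont _ hvb)
      (hderiv _ hvb) fun z hz => hnonpos z (interior_subset hz)
    exact hb.trans (hanti ⟨le_rfl, hv.2⟩ (right_mem_Icc.2 hv.2) hv.2)
  · push Not at hneg
    have hav : Icc a v ⊆ Icc a b := Icc_subset_Icc_right hv.2
    have hmono := monotoneOn_of_hasDerivWithinAt_nonneg (convex_Icc a v) (hcont _ hav)
      (hderiv _ hav) fun z hz => hneg z (interior_subset hz)
    exact ha.trans (hmono (left_mem_Icc.2 hv.1) (right_mem_Icc.2 hv.1) hv.1)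

lemma hasDerivAt_add_const_rpow {q c x : ℝ} (hx : 0 < x + c) :
    HasDerivAt (fun t : ℝ => (t + c) ^ q) (q * (x + c) ^ (q - 1)) x := by
  simpa using ((hasDerivAt_id x).add_const c).rpow_const (p := q) (Or.inl hx.ne')

lemma cubic_deriv_sub_add_rpow_deriv_nonneg {p δ lam c A B : ℝ} (hp0 : 0 ≤ p) (hp1 : p ≤ 1)
    (hδ : 0 < δ) (hlam : 0 < lam) (h0 : p * lam ^ (p - 1) = c)
    (hd1 : c + 2 * A * δ + 3 * B * δ ^ 2 = p * δ ^ (p - 1))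
    (hd2 : 2 * A + 6 * B * δ = p * (p - 1) * δ ^ (p - 2)) :
    ∀ x ∈ Icc 0 δ, 0 ≤ c + 2 * A * x + 3 * B * x ^ 2 - p * (x + lam) ^ (p - 1) := by
  have hderiv : ∀ x ∈ Icc 0 δ,
      HasDerivAt (fun t => c + 2 * A * t + 3 * B * t ^ 2 - p * (t + lam) ^ (p - 1))
        (2 * A + 6 * B * x - p * (p - 1) * (x + lam) ^ (p - 2)) x := fun x hx => by
    refine (((hasDerivAt_id x).const_mul (2 * A)).const_add c |>.add
      ((hasDerivAt_pow 2 x).const_mul (3 * B))).sub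
      ((hasDerivAt_add_const_rpow (by linarith [hx.1])).const_mul p) |>.congr_deriv ?_
    rw [show p - 1 - 1 = p - 2 by ring]
    simp only [Nat.cast_ofNat]
    ring
  have hconv : ConvexOn ℝ (Icc 0 δ)
      fun x => 2 * A + 6 * B * x - p * (p - 1) * (x + lam) ^ (p - 2) := by
    have hpow := ((convexOn_add_const_rpow_of_nonpos (c := lam) (by linarith : p - 2 ≤ 0)).subset
      (fun x hx => by simp only [mem_Ioi]; linarith [hx.1]) (convex_Icc 0 δ)).smul
      (mul_nonneg hp0 (by linarith : 0 ≤ 1 - p))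
    have haff : ConvexOn ℝ (Icc 0 δ) fun x => 6 * B * x + 2 * A :=
      ((LinearMap.mul ℝ ℝ (6 * B)).convexOn (convex_Icc 0 δ)).add_const (2 * A)
    refine (haff.add hpow).congr fun x _ => ?_
    simp only [Pi.add_apply, smul_eq_mul]
    ring
  have hδ'' : 2 * A + 6 * B * δ - p * (p - 1) * (δ + lam) ^ (p - 2) ≤ 0 := by
    rw [hd2, ← mul_sub]
    exact mul_nonpos_of_nonpos_of_nonneg (mul_nonpos_of_nonneg_of_nonpos hp0 (by linarith))
      (sub_nonneg.2 (rpow_le_rpow_of_nonpos hδ (by linarith) (by linarith)))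
  have hδ' : 0 ≤ c + 2 * A * δ + 3 * B * δ ^ 2 - p * (δ + lam) ^ (p - 1) := by
    rw [hd1, ← mul_sub]
    exact mul_nonneg hp0 (sub_nonneg.2 (rpow_le_rpow_of_nonpos hδ (by linarith) (by linarith)))
  exact nonneg_of_convexOn_deriv hderiv hconv hδ'' (by simp [h0]) hδ'

lemma add_rpow_sub_rpow_le_cubic {p δ lam c A B : ℝ} (hp0 : 0 ≤ p) (hp1 : p ≤ 1) (hδ : 0 < δ)
    (hlam : 0 < lam) (h0 : p * lam ^ (p - 1) = c)
    (hd1 : c + 2 * A * δ + 3 * B * δ ^ 2 = p * δ ^ (p - 1))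
    (hd2 : 2 * A + 6 * B * δ = p * (p - 1) * δ ^ (p - 2)) :
    ∀ w ∈ Icc 0 δ, (w + lam) ^ p - lam ^ p ≤ c * w + A * w ^ 2 + B * w ^ 3 := by
  have hderiv : ∀ x ∈ Icc 0 δ,
      HasDerivAt (fun t => c * t + A * t ^ 2 + B * t ^ 3 - (t + lam) ^ p)
        (c + 2 * A * x + 3 * B * x ^ 2 - p * (x + lam) ^ (p - 1)) x := fun x hx => by
    refine ((((hasDerivAt_id x).const_mul c).add ((hasDerivAt_pow 2 x).const_mul A)).add
      ((hasDerivAt_pow 3 x).const_mul B)).sub (hasDerivAt_add_const_rpow (by linarith [hx.1]))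
      |>.congr_deriv ?_
    simp only [Nat.cast_ofNat]
    ring
  have hderiv_nonneg := cubic_deriv_sub_add_rpow_deriv_nonneg hp0 hp1 hδ hlam h0 hd1 hd2
  have hmono := monotoneOn_of_hasDerivWithinAt_nonneg (convex_Icc 0 δ)
    (fun x hx => (hderiv x hx).continuousAt.continuousWithinAt)
    (fun x hx => (hderiv x (interior_subset hx)).hasDerivWithinAt)
    (fun x hx => hderiv_nonneg x (interior_subset hx))
  intro w hw
  have h := hmono (left_mem_Icc.2 hδ.le) hw hw.1
  simp only [mul_zero, ne_eq, OfNat.ofNat_ne_zero, not_false_eq_true, zero_pow, add_zero,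
    zero_add] at h
  linarith

lemma deriv_deriv_rpow_const (p x : ℝ) :
    deriv (deriv fun w : ℝ => w ^ p) x = p * (p - 1) * x ^ (p - 2) := by
  simpa [descPochhammer_succ_right] using iter_deriv_rpow_const p x 2

theorem stmt_19 (p δ : ℝ) (hp0 : 0 < p) (hp1 : p < 1) (hδ : 0 < δ)
    (f : ℝ → ℝ) (hf : f = fun w => w ^ p)
    (g1 : ℝ) (hg1 : g1 = 3 * f δ / δ - 2 * deriv f δ + δ * deriv (deriv f) δ / 2)
    (g : ℝ → ℝ)
    (hg : g = fun w =>
      if w ≤ δ then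
        g1 * w +
        (-6 * f δ / δ ^ 2 + 6 * deriv f δ / δ - 2 * deriv (deriv f) δ) / 2 * w ^ 2 +
        (6 * f δ / δ ^ 3 - 6 * deriv f δ / δ ^ 2 + 3 * deriv (deriv f) δ / δ) / 6 * w ^ 3
      else f w)
    (lam : ℝ) (hlam : lam = (g1 / p) ^ (1 / (p - 1))) :
    ∀ w : ℝ, 0 ≤ w → (w + lam) ^ p - lam ^ p ≤ g w := by
  subst hf hg
  have hd1 : deriv (fun w : ℝ => w ^ p) δ = p * δ ^ (p - 1) := deriv_rpow_const δ p
  have hd2 := deriv_deriv_rpow_const p δ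
  have hg1pos : 0 < g1 := by
    have hg1' : g1 = (2 - p) * (3 - p) / 2 * δ ^ (p - 1) := by
      rw [hg1, hd1, hd2, show p - 2 = p - 1 - 1 by ring, rpow_sub_one hδ.ne' (p - 1),
        rpow_sub_one hδ.ne' p]
      field_simp
      ring
    rw [hg1']
    exact mul_pos (by nlinarith) (rpow_pos_of_pos hδ _)
  have hlam0 : 0 < lam := hlam ▸ rpow_pos_of_pos (div_pos hg1pos hp0) _
  have hlam_root : p * lam ^ (p - 1) = g1 := by
    rw [hlam, ← rpow_mul (div_pos hg1pos hp0).le, one_div_mul_cancel (by linarith : p - 1 ≠ 0),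
      rpow_one]
    field_simp
  intro w hw
  dsimp only
  split_ifs with hwδ
  · refine add_rpow_sub_rpow_le_cubic hp0.le hp1.le hδ hlam0 hlam_root ?_ ?_ w ⟨hw, hwδ⟩
    · rw [hg1, ← hd1]
      field_simp
      ring
    · rw [← hd2]
      field_simp
      ring
  · linarith [rpow_add_le_add_rpow hw hlam0.le hp0.le hp1.le]
end
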